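/- arXiv:2210.03789 — 2 statements merged into one kernel-verified Lean document; each statement's English description precedes it below -/
import Mathlib

section
/- For every ε > 0 there exists Q such that for every odd prime power q ≥ Q there exists a subset Y ⊆ F_q with |Y| = ⌊(1/2 − ε)·log₂ q⌋ that is shattered by the set S_q of nonzero squares in the modified sense; in particular the VC-dimension of S_q with respect to additive translates is at least (1/2 − ε)·log₂ q − 1. -/
/-- `S` shatters the finite set `Y` in the modified sense: for every `A ⊆ Y` there is a
translate `x ∉ Y` with `y ∈ A ↔ y - x ∈ S` for all `y ∈ Y`. -/
def ModShatters {F : Type} [Field F] (S : Set F) (Y : Finset F) : Prop :=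
  ∀ A ⊆ Y, ∃ x : F, x ∉ Y ∧ ∀ y ∈ Y, (y ∈ A ↔ y - x ∈ S)

/-- The set of nonzero squares in `F`. -/
def Squares (F : Type) [Field F] : Set F := {z : F | ∃ w : F, w ≠ 0 ∧ z = w ^ 2}

/-- The VC-dimension of the family of additive translates of `S ⊆ F` (with the modified
notion of shattering): the largest size of a shattered finite subset. -/
noncomputable def vcDim (F : Type) [Field F] (S : Set F) : ℕ :=
  sSup {n : ℕ | ∃ Y : Finset F, Y.card = n ∧ ModShatters S Y}

/-! Let `χ` be the quadratic character of `F` and `q = #F`. Build `Y` greedily, keeping every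
pattern class `{x | ∀ y ∈ Y, χ (y - x) = if y ∈ A then 1 else -1}` (`A ⊆ Y`) of size at least
`q / 2 ^ #Y - (√(2q) + 1)`. The Jacobi sum `J(χ, χ) = -χ(-1)` gives the second moment
`∑ y, (∑ x ∈ C, χ (y - x)) ^ 2 = #C * (q - #C)`, so by Markov at most `#C / 2` points `y` make
the character sum over `C` exceed `√(2q)`. The classes are disjoint, hence some new `y` is good
for all of them at once, and adding it splits every class almost in half. While
`2 ^ #Y * (√(2q) + 1) < q`, which holds for `#Y ≤ (1/2 - ε) log₂ q` and large `q`, all classes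
are nonempty, and a point of the class of `A` is a translate realizing `A`. -/

section CharacterSums

open Finset

variable {F : Type*} [Field F] [Fintype F] [DecidableEq F]

lemma sum_quadraticChar_mul_self :
    ∑ z : F, quadraticChar F z * quadraticChar F z = Fintype.card F - 1 := by
  simp_rw [← MulChar.mul_apply, ← sq, (quadraticChar_isQuadratic F).sq_eq_one,
    MulChar.sum_one_eq_card_units, Fintype.card_units]
  have := Fintype.card_pos (α := F)
  push_cast [Nat.cast_sub this]
  rfl

lemma sum_quadraticChar_sub_mul_sub_of_ne (hF : ringChar F ≠ 2) {x x' : F} (h : x ≠ x') :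
    ∑ y, quadraticChar F (y - x) * quadraticChar F (y - x') = -1 := by
  set χ := quadraticChar F
  have hc : x' - x ≠ 0 := sub_ne_zero.mpr h.symm
  have hχ : χ⁻¹ = χ := (quadraticChar_isQuadratic F).inv
  -- substituting `y = x + (x' - x) * t` turns the sum into `χ (-1) * J(χ, χ)`
  calc ∑ y, χ (y - x) * χ (y - x')
      = ∑ t, χ ((x' - x) * t) * χ (-1 * (x' - x) * (1 - t)) := by
        rw [← ((Equiv.mulLeft₀ _ hc).trans (Equiv.addLeft x)).sum_comp]
        refine Fintype.sum_congr _ _ fun t => ?_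
        simp only [Equiv.trans_apply, Equiv.mulLeft₀_apply, Equiv.coe_addLeft]
        ring_nf
    _ = χ (-1) * χ (x' - x) ^ 2 * jacobiSum χ χ⁻¹ := by
        rw [hχ, jacobiSum, mul_sum]
        refine Fintype.sum_congr _ _ fun t => ?_
        simp only [map_mul]
        ring
    _ = -1 := by
        rw [quadraticChar_sq_one hc, jacobiSum_nontrivial_inv (quadraticChar_ne_one hF)]
        linear_combination -quadraticChar_sq_one (neg_ne_zero.mpr (one_ne_zero (α := F)))

lemma sum_quadraticChar_sub_mul_sub (hF : ringChar F ≠ 2) (x x' : F) :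
    ∑ y, quadraticChar F (y - x) * quadraticChar F (y - x') =
      if x = x' then (Fintype.card F : ℤ) - 1 else -1 := by
  split_ifs with h
  · subst h
    rw [← sum_quadraticChar_mul_self]
    exact (Equiv.subRight x).sum_comp fun z => quadraticChar F z * quadraticChar F z
  · exact sum_quadraticChar_sub_mul_sub_of_ne hF h

lemma sum_sq_sum_quadraticChar_sub (hF : ringChar F ≠ 2) (C : Finset F) :
    ∑ y, (∑ x ∈ C, quadraticChar F (y - x)) ^ 2 = #C * (Fintype.card F - #C) := by
  simp_rw [sq, sum_mul_sum]
  rw [sum_comm]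
  simp_rw [sum_comm (s := univ), sum_quadraticChar_sub_mul_sub hF]
  have (x x' : F) : (if x = x' then (Fintype.card F : ℤ) - 1 else -1) =
      (if x = x' then (Fintype.card F : ℤ) else 0) - 1 := by split_ifs <;> ring
  simp_rw [this, sum_sub_distrib, sum_ite_eq, sum_const, nsmul_eq_mul]
  rw [sum_ite_mem, inter_self, sum_const, nsmul_eq_mul]
  ring

end CharacterSums

section PatternClasses

open Finset

variable {F : Type*} [Field F] [Fintype F] [DecidableEq F]

def patternClass (Y A : Finset F) : Finset F :=
  univ.filter fun x => ∀ y ∈ Y, quadraticChar F (y - x) = if y ∈ A then 1 else -1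

lemma notMem_of_mem_patternClass {Y A : Finset F} {x : F} (hx : x ∈ patternClass Y A) :
    x ∉ Y := fun hxY => by
  have := (mem_filter.mp hx).2 x hxY
  split_ifs at this <;> simp at this

lemma filter_eq_of_mem_patternClass {Y A : Finset F} {x : F} (hA : A ⊆ Y)
    (hx : x ∈ patternClass Y A) : Y.filter (fun y => quadraticChar F (y - x) = 1) = A := by
  ext y
  simp only [mem_filter]
  constructor
  · rintro ⟨hy, h⟩
    by_contra hyA
    have := (mem_filter.mp hx).2 y hy
    rw [if_neg hyA, h] at this
    norm_num at this
  · intro hyA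
    have := (mem_filter.mp hx).2 y (hA hyA)
    exact ⟨hA hyA, by rwa [if_pos hyA] at this⟩

lemma sum_card_patternClass_le (Y : Finset F) :
    ∑ A ∈ Y.powerset, #(patternClass Y A) ≤ Fintype.card F := by
  rw [← card_biUnion]
  · exact card_le_univ _
  intro A hA B hB hAB
  refine disjoint_left.mpr fun x hxA hxB => hAB ?_
  rw [← filter_eq_of_mem_patternClass (mem_powerset.mp hA) hxA,
    filter_eq_of_mem_patternClass (mem_powerset.mp hB) hxB]

lemma patternClass_insert {Y : Finset F} {y : F} (hy : y ∉ Y) (A : Finset F) :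
    patternClass (insert y Y) A = (patternClass Y (A.erase y)).filter
      fun x => quadraticChar F (y - x) = if y ∈ A then 1 else -1 := by
  ext x
  simp only [patternClass, mem_filter, mem_univ, true_and, forall_mem_insert]
  rw [and_comm]
  refine and_congr_left' (forall₂_congr fun z hz => ?_)
  simp only [mem_erase, ne_of_mem_of_not_mem hz hy, ne_eq, not_false_eq_true, true_and]

lemma card_add_mul_sum_quadraticChar_le (C : Finset F) (y : F) {σ : ℤ} (hσ : σ = 1 ∨ σ = -1) :
    #C + σ * ∑ x ∈ C, quadraticChar F (y - x) ≤
      2 * #(C.filter fun x => quadraticChar F (y - x) = σ) + 1 := by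
  have pointwise (x : F) : 1 + σ * quadraticChar F (y - x) ≤
      2 * (if quadraticChar F (y - x) = σ then 1 else 0) + (if x = y then 1 else 0) := by
    rcases eq_or_ne x y with rfl | hxy
    · rcases hσ with rfl | rfl <;> simp
    rcases quadraticChar_dichotomy (sub_ne_zero.mpr hxy.symm) with h | h <;>
      rcases hσ with rfl | rfl <;> simp [h, hxy]
  have hy : #(C.filter (· = y)) ≤ 1 := by
    rw [filter_eq']; split_ifs <;> simp
  calc (#C : ℤ) + σ * ∑ x ∈ C, quadraticChar F (y - x)
      = ∑ x ∈ C, (1 + σ * quadraticChar F (y - x)) := by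
        rw [sum_add_distrib, mul_sum, sum_const, nsmul_one]
    _ ≤ ∑ x ∈ C, (2 * (if quadraticChar F (y - x) = σ then 1 else 0) + (if x = y then 1 else 0)) :=
        sum_le_sum fun x _ => pointwise x
    _ ≤ 2 * #(C.filter fun x => quadraticChar F (y - x) = σ) + 1 := by
        rw [sum_add_distrib, ← mul_sum, sum_boole, sum_boole]
        exact_mod_cast Nat.add_le_add_left hy _

lemma two_mul_card_filter_lt_sq_sum_le (hF : ringChar F ≠ 2) (C : Finset F) :
    2 * #(univ.filter fun y => 2 * (Fintype.card F : ℤ) < (∑ x ∈ C, quadraticChar F (y - x)) ^ 2)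
      ≤ #C := by
  set B := univ.filter fun y => 2 * (Fintype.card F : ℤ) < (∑ x ∈ C, quadraticChar F (y - x)) ^ 2
  have hB : (#B : ℤ) * (2 * Fintype.card F) ≤ ∑ y ∈ B, (∑ x ∈ C, quadraticChar F (y - x)) ^ 2 := by
    rw [← nsmul_eq_mul]
    exact card_nsmul_le_sum _ _ _ fun y hy => (mem_filter.mp hy).2.le
  have hsum : ∑ y ∈ B, (∑ x ∈ C, quadraticChar F (y - x)) ^ 2 ≤ #C * (Fintype.card F - #C) := by
    rw [← sum_sq_sum_quadraticChar_sub hF]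
    exact sum_le_sum_of_subset_of_nonneg (subset_univ _) fun _ _ _ => sq_nonneg _
  have hq : (0 : ℤ) < Fintype.card F := by exact_mod_cast Fintype.card_pos
  have : (2 * #B : ℤ) * Fintype.card F ≤ #C * Fintype.card F := by nlinarith
  exact_mod_cast le_of_mul_le_mul_right this hq

lemma exists_notMem_forall_sq_sum_quadraticChar_le (hF : ringChar F ≠ 2) {Y : Finset F}
    (hY : 2 * #Y < Fintype.card F) :
    ∃ y ∉ Y, ∀ A ⊆ Y,
      (∑ x ∈ patternClass Y A, quadraticChar F (y - x)) ^ 2 ≤ 2 * (Fintype.card F : ℤ) := by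
  set bad := fun A => univ.filter fun y =>
    2 * (Fintype.card F : ℤ) < (∑ x ∈ patternClass Y A, quadraticChar F (y - x)) ^ 2
  have hbad : 2 * ∑ A ∈ Y.powerset, #(bad A) ≤ Fintype.card F :=
    calc 2 * ∑ A ∈ Y.powerset, #(bad A) = ∑ A ∈ Y.powerset, 2 * #(bad A) := mul_sum _ _ _
      _ ≤ ∑ A ∈ Y.powerset, #(patternClass Y A) :=
        sum_le_sum fun A _ => two_mul_card_filter_lt_sq_sum_le hF _
      _ ≤ Fintype.card F := sum_card_patternClass_le Y
  have hcard : #(Y ∪ Y.powerset.biUnion bad) < #(univ : Finset F) := by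
    have := card_biUnion_le (s := Y.powerset) (t := bad)
    have := card_union_le Y (Y.powerset.biUnion bad)
    rw [card_univ]
    omega
  obtain ⟨y, -, hy⟩ := exists_mem_notMem_of_card_lt_card hcard
  simp only [mem_union, mem_biUnion, mem_powerset, mem_filter, mem_univ, true_and, not_or,
    not_exists, not_and, not_lt, bad] at hy
  exact ⟨y, hy.1, hy.2⟩

-- `q / 2 ^ k - (√(2q) + 1)` is stable under the splitting step `c ↦ (c - 1 - √(2q)) / 2`.
def LargePatternClasses (Y : Finset F) : Prop :=
  ∀ A ⊆ Y, (Fintype.card F : ℝ) / 2 ^ #Y - (√(2 * Fintype.card F) + 1) ≤ #(patternClass Y A)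

lemma largePatternClasses_empty : LargePatternClasses (∅ : Finset F) := by
  intro A _
  have : patternClass (∅ : Finset F) A = univ := by ext; simp [patternClass]
  rw [this, card_univ, card_empty, pow_zero, div_one]
  linarith [Real.sqrt_nonneg (2 * Fintype.card F : ℝ)]

lemma LargePatternClasses.exists_insert (hF : ringChar F ≠ 2) {Y : Finset F}
    (hY : LargePatternClasses Y) (hcard : 2 * #Y < Fintype.card F) :
    ∃ y ∉ Y, LargePatternClasses (insert y Y) := by
  obtain ⟨y, hyY, hgood⟩ := exists_notMem_forall_sq_sum_quadraticChar_le hF hcard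
  refine ⟨y, hyY, fun A hA => ?_⟩
  have hA' : A.erase y ⊆ Y := subset_insert_iff.mp hA
  set C := patternClass Y (A.erase y)
  set σ : ℤ := if y ∈ A then 1 else -1 with hσ_def
  have hσ : σ = 1 ∨ σ = -1 := by rw [hσ_def]; split_ifs <;> simp
  set D : ℤ := ∑ x ∈ C, quadraticChar F (y - x)
  have hD : |(D : ℝ)| ≤ √(2 * Fintype.card F) := Real.abs_le_sqrt (by exact_mod_cast hgood _ hA')
  have hσD : -√(2 * Fintype.card F) ≤ (σ : ℝ) * D := by
    rcases hσ with h | h <;> rw [h] <;> push_cast <;> linarith [abs_le.mp hD]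
  have hsplit : (#C : ℝ) + σ * D ≤ 2 * #(C.filter fun x => quadraticChar F (y - x) = σ) + 1 := by
    exact_mod_cast card_add_mul_sum_quadraticChar_le C y hσ
  have hC := hY _ hA'
  rw [patternClass_insert hyY, card_insert_of_notMem hyY, pow_succ, ← div_div]
  linarith

lemma exists_card_eq_largePatternClasses (hF : ringChar F ≠ 2) :
    ∀ k, 2 * k ≤ Fintype.card F → ∃ Y : Finset F, #Y = k ∧ LargePatternClasses Y
  | 0, _ => ⟨∅, card_empty, largePatternClasses_empty⟩
  | k + 1, hk => by
    obtain ⟨Y, rfl, hY⟩ := exists_card_eq_largePatternClasses hF k (by omega)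
    obtain ⟨y, hyY, hY'⟩ := hY.exists_insert hF (by omega)
    exact ⟨insert y Y, card_insert_of_notMem hyY, hY'⟩

end PatternClasses

section Shattering

open Finset

variable {F : Type} [Field F] [Fintype F]

lemma quadraticChar_eq_one_iff_mem_squares [DecidableEq F] {z : F} :
    quadraticChar F z = 1 ↔ z ∈ Squares F := by
  rcases eq_or_ne z 0 with rfl | hz
  · simp [Squares, eq_comm (a := (0 : F))]
  rw [quadraticChar_one_iff_isSquare hz]
  constructor
  · rintro ⟨w, rfl⟩
    exact ⟨w, fun hw => hz (by simp [hw]), (sq w).symm⟩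
  · rintro ⟨w, -, rfl⟩
    exact ⟨w, sq w⟩

lemma LargePatternClasses.modShatters [DecidableEq F] {Y : Finset F} (hY : LargePatternClasses Y)
    (h : √(2 * Fintype.card F) + 1 < Fintype.card F / 2 ^ #Y) : ModShatters (Squares F) Y := by
  intro A hA
  obtain ⟨x, hx⟩ : (patternClass Y A).Nonempty :=
    card_pos.mp (by exact_mod_cast (sub_pos.mpr h).trans_le (hY A hA))
  refine ⟨x, notMem_of_mem_patternClass hx, fun y hy => ?_⟩
  rw [← quadraticChar_eq_one_iff_mem_squares, (mem_filter.mp hx).2 y hy]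
  split_ifs <;> simp [*]

lemma card_le_vcDim {S : Set F} {Y : Finset F} (h : ModShatters S Y) : #Y ≤ vcDim F S :=
  le_csSup ⟨Fintype.card F, by rintro n ⟨Z, rfl, -⟩; exact card_le_univ Z⟩ ⟨Y, rfl, h⟩

end Shattering

lemma two_pow_mul_sqrt_add_one_lt {δ q : ℝ} {k : ℕ} (hδ : 0 < δ) (hq : 3 ^ δ⁻¹ < q)
    (hk : k ≤ (1 / 2 - δ) * Real.logb 2 q) : 2 ^ k * (√(2 * q) + 1) < q := by
  have hq1 : 1 < q := (Real.one_lt_rpow (by norm_num) (inv_pos.mpr hδ)).trans hq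
  have hq0 : 0 < q := by linarith
  have h2k : (2 : ℝ) ^ k ≤ q ^ (1 / 2 - δ) :=
    calc (2 : ℝ) ^ k = 2 ^ (k : ℝ) := (Real.rpow_natCast 2 k).symm
      _ ≤ 2 ^ ((1 / 2 - δ) * Real.logb 2 q) := Real.rpow_le_rpow_of_exponent_le one_le_two hk
      _ = q ^ (1 / 2 - δ) := by
        rw [mul_comm, Real.rpow_mul zero_le_two, Real.rpow_logb two_pos (by norm_num) hq0]
  have hsqrt : √(2 * q) + 1 ≤ 3 * q ^ (1 / 2 : ℝ) := by
    rw [← Real.sqrt_eq_rpow]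
    have h1 : 1 ≤ √q := Real.one_le_sqrt.mpr hq1.le
    have h2 : √(2 * q) ≤ 2 * √q :=
      Real.sqrt_le_iff.mpr ⟨by positivity, by rw [mul_pow, Real.sq_sqrt hq0.le]; linarith⟩
    linarith
  have h3 : 3 < q ^ δ := (Real.rpow_inv_lt_iff_of_pos (by norm_num) hq0.le hδ).mp hq
  calc 2 ^ k * (√(2 * q) + 1) ≤ q ^ (1 / 2 - δ) * (3 * q ^ (1 / 2 : ℝ)) := by gcongr
    _ = 3 * q ^ (1 - δ) := by rw [mul_left_comm, ← Real.rpow_add hq0]; ring_nf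
    _ < q ^ δ * q ^ (1 - δ) := by gcongr
    _ = q := by rw [← Real.rpow_add hq0, add_sub_cancel, Real.rpow_one]

lemma two_mul_lt_of_two_pow_mul_sqrt_add_one_lt {q : ℝ} {k : ℕ}
    (h : 2 ^ k * (√(2 * q) + 1) < q) : 2 * k < q := by
  have hq : 1 < q := lt_of_le_of_lt (one_le_mul_of_one_le_of_one_le (one_le_pow₀ one_le_two)
    (by linarith [Real.sqrt_nonneg (2 * q)])) h
  have h1 : (2 : ℝ) ^ k * 2 ≤ 2 ^ k * (√(2 * q) + 1) := by
    gcongr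
    linarith [Real.one_le_sqrt.mpr (show (1 : ℝ) ≤ 2 * q by linarith)]
  have h2 : (k : ℝ) + 1 ≤ 2 ^ k := by exact_mod_cast Nat.lt_two_pow_self
  linarith

/-- For every `ε > 0` there is `Q` such that every finite field `F_q` of odd order
`q ≥ Q` contains a subset `Y` of size `⌊(1/2 - ε) log₂ q⌋` shattered by the nonzero
squares in the modified sense; in particular the VC-dimension of the squares with
respect to additive translates is at least `(1/2 - ε) log₂ q - 1`. -/
theorem exists_large_shattered_set (ε : ℝ) (hε : 0 < ε) :
    ∃ Q : ℕ, ∀ (F : Type) [Field F] [Fintype F],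
      Odd (Fintype.card F) → Q ≤ Fintype.card F →
      (∃ Y : Finset F,
          Y.card = ⌊(1 / 2 - ε) * Real.logb 2 (Fintype.card F)⌋₊ ∧
          ModShatters (Squares F) Y) ∧
      (1 / 2 - ε) * Real.logb 2 (Fintype.card F) - 1 ≤ (vcDim F (Squares F) : ℝ) := by
  set δ := min ε (1 / 2)
  refine ⟨⌈(3 : ℝ) ^ δ⁻¹⌉₊ + 1, fun F _ _ hodd hQ => ?_⟩
  classical
  have hF : ringChar F ≠ 2 := fun h =>
    Nat.not_even_iff_odd.mpr hodd (Nat.even_iff.mpr (FiniteField.even_card_iff_char_two.mp h))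
  set q := Fintype.card F
  set k := ⌊(1 / 2 - ε) * Real.logb 2 q⌋₊
  have hk : (k : ℝ) ≤ (1 / 2 - δ) * Real.logb 2 q := by
    have hlog : 0 ≤ Real.logb 2 q :=
      Real.logb_nonneg one_lt_two (by exact_mod_cast Fintype.card_pos)
    exact (Nat.cast_le.mpr (Nat.floor_le_floor (by gcongr; exact min_le_left _ _))).trans
      (Nat.floor_le (mul_nonneg (by linarith [min_le_right ε (1 / 2)]) hlog))
  have hbound := two_pow_mul_sqrt_add_one_lt (lt_min hε one_half_pos) (Nat.lt_of_ceil_lt hQ) hk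
  have h2k : 2 * k ≤ q := by exact_mod_cast (two_mul_lt_of_two_pow_mul_sqrt_add_one_lt hbound).le
  obtain ⟨Y, hYk, hY⟩ := exists_card_eq_largePatternClasses hF k h2k
  have hshatter := hY.modShatters (by rwa [hYk, lt_div_iff₀' (by positivity)])
  refine ⟨⟨Y, hYk, hshatter⟩, ?_⟩
  have hvc : (k : ℝ) ≤ vcDim F (Squares F) := by exact_mod_cast hYk ▸ card_le_vcDim hshatter
  linarith [Nat.sub_one_lt_floor ((1 / 2 - ε) * Real.logb 2 q)]
end

section
/- Let q be an odd prime power, let a ∈ F_q with a ≠ 0, and let b ∈ F_q. Then a finite set Y ⊆ F_q is shattered by S_q in the modified sense if and only if the set a·Y + b = {a·y + b : y ∈ Y} is shattered by S_q in the modified sense. -/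
/-!
An affine map `y ↦ a * y + b` turns differences `y - x` into `a * (y - x)`. Multiplication by
`a ≠ 0` either preserves the nonzero squares or swaps them with the non-squares, since they form
a subgroup of index at most two of `Fˣ`. So a pattern `A` on `a·Y + b` is realised by the image
of a translate realising on `Y` either the preimage of `A` or its complement.
-/

section Shattering

variable {F : Type} [Field F] [DecidableEq F]

theorem ModShatters.image_affine {S : Set F} {a : F} (p : Prop) (ha : a ≠ 0)
    (hS : ∀ s ≠ 0, a * s ∈ S ↔ (p ↔ s ∈ S)) (b : F) {Y : Finset F} (h : ModShatters S Y) :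
    ModShatters S (Y.image fun y => a * y + b) := by
  classical
  intro A _
  obtain ⟨x, hxY, hx⟩ := h {y ∈ Y | p ↔ a * y + b ∈ A} (Finset.filter_subset _ _)
  refine ⟨a * x + b, fun hmem => ?_, ?_⟩
  · obtain ⟨y, hy, hyx⟩ := Finset.mem_image.mp hmem
    obtain rfl : y = x := mul_left_cancel₀ ha (add_right_cancel hyx)
    exact hxY hy
  · simp only [Finset.mem_image, forall_exists_index, and_imp, forall_apply_eq_imp_iff₂]
    intro y hy
    have hyx : y - x ≠ 0 := sub_ne_zero.mpr fun h => hxY (h ▸ hy)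
    rw [show a * y + b - (a * x + b) = a * (y - x) by ring, hS _ hyx, ← hx y hy,
      Finset.mem_filter]
    tauto

theorem Finset.image_affine_inv_image_affine {a : F} (ha : a ≠ 0) (b : F) (Y : Finset F) :
    ((Y.image fun y => a * y + b).image fun z => a⁻¹ * z + -(a⁻¹ * b)) = Y := by
  have hinv : ((fun z => a⁻¹ * z + -(a⁻¹ * b)) ∘ fun y => a * y + b) = id := by
    funext y
    simp [mul_add, inv_mul_cancel_left₀ ha]
  rw [Finset.image_image, hinv, Finset.image_id]

end Shattering

section Squares

theorem mem_nonzeroSquares_iff {F : Type} [Field F] {z : F} :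
    z ∈ {z : F | ∃ w : F, w ≠ 0 ∧ z = w ^ 2} ↔ z ≠ 0 ∧ IsSquare z := by
  constructor
  · rintro ⟨w, hw, rfl⟩
    exact ⟨pow_ne_zero 2 hw, w, sq w⟩
  · rintro ⟨hz, w, rfl⟩
    exact ⟨w, fun hw => hz (by simp [hw]), (sq w).symm⟩

variable {F : Type} [Field F] [Fintype F] [DecidableEq F]

theorem FiniteField.isSquare_mul_iff {a s : F} (ha : a ≠ 0) (hs : s ≠ 0) :
    IsSquare (a * s) ↔ (IsSquare a ↔ IsSquare s) := by
  rw [← quadraticChar_one_iff_isSquare (mul_ne_zero ha hs), ← quadraticChar_one_iff_isSquare ha,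
    ← quadraticChar_one_iff_isSquare hs, map_mul]
  rcases quadraticChar_dichotomy ha with h | h <;>
    rcases quadraticChar_dichotomy hs with h' | h' <;> norm_num [h, h']

theorem mul_mem_nonzeroSquares_iff {a s : F} (ha : a ≠ 0) (hs : s ≠ 0) :
    a * s ∈ {z : F | ∃ w : F, w ≠ 0 ∧ z = w ^ 2} ↔
      (IsSquare a ↔ s ∈ {z : F | ∃ w : F, w ≠ 0 ∧ z = w ^ 2}) := by
  simp only [mem_nonzeroSquares_iff, ne_eq, mul_eq_zero, ha, hs, or_self, not_false_eq_true,
    true_and, FiniteField.isSquare_mul_iff ha hs]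

end Squares

theorem shattered_iff_affine_image_shattered_general (F : Type) [Field F] [Fintype F]
    [DecidableEq F] (a b : F) (ha : a ≠ 0)
    (Y : Finset F) :
    ModShatters {z : F | ∃ w : F, w ≠ 0 ∧ z = w ^ 2} Y ↔
      ModShatters {z : F | ∃ w : F, w ≠ 0 ∧ z = w ^ 2}
        (Y.image (fun y => a * y + b)) := by
  refine ⟨ModShatters.image_affine _ ha (fun _ => mul_mem_nonzeroSquares_iff ha) b, fun h => ?_⟩
  have ha' : a⁻¹ ≠ 0 := inv_ne_zero ha
  simpa only [Finset.image_affine_inv_image_affine ha] using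
    ModShatters.image_affine _ ha' (fun _ => mul_mem_nonzeroSquares_iff ha') (-(a⁻¹ * b)) h

/-- Being shattered by the nonzero squares is translation-dilation invariant: for an
odd-order finite field `F`, `a ≠ 0` and `b ∈ F`, a finite set `Y` is shattered by the
squares in the modified sense iff `a·Y + b` is. -/
theorem shattered_iff_affine_image_shattered (F : Type) [Field F] [Fintype F]
    [DecidableEq F] (hodd : Odd (Fintype.card F)) (a b : F) (ha : a ≠ 0)
    (Y : Finset F) :
    ModShatters {z : F | ∃ w : F, w ≠ 0 ∧ z = w ^ 2} Y ↔
      ModShatters {z : F | ∃ w : F, w ≠ 0 ∧ z = w ^ 2}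
        (Y.image (fun y => a * y + b)) :=
  shattered_iff_affine_image_shattered_general F a b ha Y
end
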